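/- If R₀,…,R_t and S₀,…,S_t are all strictly positive, then S_t ≤ B³·R_t^{−2}, where B = ‖λ*‖₁; equivalently, the quantity R_t²·S_t never exceeds B³ along the AdaBoost trajectory as long as these quantities remain positive. -/

import Mathlib

/-- The exponential loss `L(λ) = (1/m) ∑ᵢ exp(−(Mλ)ᵢ)`. -/
noncomputable def expLoss {m N : ℕ} (M : Matrix (Fin m) (Fin N) ℝ) (lam : Fin N → ℝ) : ℝ :=
  (1 / (m : ℝ)) * ∑ i, Real.exp (-(M.mulVec lam i))

/-- AdaBoost's distribution `D(i) ∝ exp(−(Mλ)ᵢ)`. -/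
noncomputable def wt {m N : ℕ} (M : Matrix (Fin m) (Fin N) ℝ) (lam : Fin N → ℝ) (i : Fin m) : ℝ :=
  Real.exp (-(M.mulVec lam i)) / ∑ i', Real.exp (-(M.mulVec lam i'))

/-- The ℓ₁-norm on `ℝ^N`. -/
noncomputable def l1 {N : ℕ} (v : Fin N → ℝ) : ℝ := ∑ j, |v j|

/-- `lam`, `j`, `r` describe a run of AdaBoost on feature matrix `M`:
`lam 0 = 0`, and at each round the coordinate `j t` of maximal absolute correlation is
chosen, `r t` is its correlation, and the step is `α_t = ½ ln((1+r_t)/(1−r_t))`. -/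
def IsAdaBoost {m N : ℕ} (M : Matrix (Fin m) (Fin N) ℝ)
    (lam : ℕ → Fin N → ℝ) (j : ℕ → Fin N) (r : ℕ → ℝ) : Prop :=
  lam 0 = 0 ∧
  ∀ t : ℕ,
    (∀ j' : Fin N, |∑ i, wt M (lam t) i * M i j'| ≤ |∑ i, wt M (lam t) i * M i (j t)|) ∧
    r t = ∑ i, wt M (lam t) i * M i (j t) ∧
    lam (t + 1) = lam t + Pi.single (j t) ((1 / 2) * Real.log ((1 + r t) / (1 - r t)))


/-- The logarithmic suboptimality `R(λ) = ln L(λ) − ln L(λ*)` relative to a reference `λ*`. -/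
noncomputable def Rlog {m N : ℕ} (M : Matrix (Fin m) (Fin N) ℝ)
    (lamStar lam : Fin N → ℝ) : ℝ :=
  Real.log (expLoss M lam) - Real.log (expLoss M lamStar)

/-- The ℓ₁-distance `S(λ) = inf {‖μ − λ‖₁ : L(μ) ≤ L(λ*)}` from `λ` to the set of
combinations achieving the target loss. -/
noncomputable def Sdist {m N : ℕ} (M : Matrix (Fin m) (Fin N) ℝ)
    (lamStar lam : Fin N → ℝ) : ℝ :=
  sInf {d : ℝ | ∃ μ : Fin N → ℝ, expLoss M μ ≤ expLoss M lamStar ∧ d = l1 (μ - lam)}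

/-! The potential `R² S` never increases along AdaBoost and starts below `B³`: `S₀ ≤ ‖λ* − 0‖₁ = B`,
and `R₀ = −ln L(λ*) ≤ B` because `|(Mλ*)ᵢ| ≤ B`. In a round with edge `δ`:
* convexity of `exp` bounds the log-loss gap to any `μ` by the correlations of `D` against `μ − λ`,
  hence by `δ ‖μ − λ‖₁`; so `R ≤ δ S`;
* the loss bound gives `R' ≤ R − c` with `c = −½ ln(1 − δ²)`;
* the step has length `|α| = artanh δ`, so `S' ≤ S + artanh δ`.
Since `δ artanh δ ≤ 2c`, an explicit polynomial identity then yields `R'² S' ≤ R² S`. -/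

open Real Matrix

theorem Real.log_le_sub_inv_div_two {s : ℝ} (hs : 1 ≤ s) : log s ≤ (s - s⁻¹) / 2 := by
  have hs0 : 0 < s := one_pos.trans_le hs
  set a := (s - s⁻¹) / 2
  have ha : 0 ≤ a := by
    have : s⁻¹ ≤ s := (inv_le_one_of_one_le₀ hs).trans hs
    simp only [a]; linarith
  have hquad : s ≤ 1 + a + a ^ 2 / 2 := by
    have key : 1 + a + a ^ 2 / 2 - s = (s - 1) ^ 4 / (8 * s ^ 2) := by
      simp only [a]; field_simp; ring
    linarith [show 0 ≤ (s - 1) ^ 4 / (8 * s ^ 2) by positivity]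
  calc log s ≤ log (exp a) := log_le_log hs0 (hquad.trans (quadratic_le_exp_of_nonneg ha))
    _ = a := log_exp a

theorem Real.log_one_add_div_one_sub_le {x : ℝ} (h0 : 0 ≤ x) (h1 : x < 1) :
    log ((1 + x) / (1 - x)) ≤ 2 * x / (1 - x ^ 2) := by
  have hm : 0 < 1 - x := by linarith
  have hu : 1 ≤ (1 + x) / (1 - x) := by rw [le_div_iff₀ hm]; linarith
  have hq : 1 - x ^ 2 ≠ 0 := by nlinarith
  convert log_le_sub_inv_div_two hu using 1
  field_simp
  ring

theorem Real.mul_artanh_le {d : ℝ} (h0 : 0 ≤ d) (h1 : d < 1) :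
    d * artanh d ≤ -log (1 - d ^ 2) := by
  -- `F x = 2 (x artanh x + log (1 - x²))` on `[0, 1)`, and `F' ≤ 0` there.
  set F : ℝ → ℝ := fun x ↦ (2 + x) * log (1 + x) + (2 - x) * log (1 - x)
  have hF : ∀ x ∈ Set.Ico (0 : ℝ) 1,
      HasDerivAt F (log ((1 + x) / (1 - x)) - 2 * x / (1 - x ^ 2)) x := by
    rintro x ⟨hx0, hx1⟩
    have hp : 1 + x ≠ 0 := by linarith
    have hm : 1 - x ≠ 0 := by linarith
    have := (((hasDerivAt_id x).const_add 2).mul (((hasDerivAt_id x).const_add 1).log hp)).add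
      (((hasDerivAt_id x).const_sub 2).mul (((hasDerivAt_id x).const_sub 1).log hm))
    refine this.congr_deriv ?_
    have hq : 1 - x ^ 2 ≠ 0 := by nlinarith
    simp only [id, log_div hp hm]
    field_simp
    ring
  have hanti : AntitoneOn F (Set.Ico 0 1) := by
    refine antitoneOn_of_hasDerivWithinAt_nonpos (convex_Ico 0 1)
      (fun x hx ↦ (hF x hx).continuousAt.continuousWithinAt)
      (fun x hx ↦ (hF x (interior_subset hx)).hasDerivWithinAt) (fun x hx ↦ ?_)
    rw [interior_Ico] at hx
    linarith [log_one_add_div_one_sub_le hx.1.le hx.2]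
  have hFd : F d ≤ 0 := by
    simpa [F] using hanti ⟨le_rfl, one_pos⟩ ⟨h0, h1⟩ h0
  have hp : (0 : ℝ) < 1 + d := by linarith
  have hm : (0 : ℝ) < 1 - d := by linarith
  rw [artanh_eq_half_log ⟨by linarith, h1.le⟩, log_div hp.ne' hm.ne',
    show 1 - d ^ 2 = (1 + d) * (1 - d) by ring, log_mul hp.ne' hm.ne']
  simp only [F] at hFd
  linarith

theorem Real.artanh_neg_eq_neg_artanh (x : ℝ) : artanh (-x) = -artanh x := by
  rw [artanh, artanh, ← log_inv, ← sqrt_inv, inv_div]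
  congr 3; ring

theorem Real.abs_artanh (x : ℝ) : |artanh x| = artanh |x| := by
  rcases le_total 0 x with hx | hx
  · rw [abs_of_nonneg hx, abs_of_nonneg (artanh_nonneg hx)]
  · rw [abs_of_nonpos hx, abs_of_nonpos (artanh_nonpos hx), artanh_neg_eq_neg_artanh]

theorem sq_mul_le_sq_mul {R S R' S' δ c α : ℝ} (hδ : 0 < δ) (hc : 0 ≤ c) (hδα : δ * α ≤ 2 * c)
    (hRS : R ≤ δ * S) (hR' : 0 < R') (hRR' : R' ≤ R - c) (hS' : 0 ≤ S') (hSS' : S' ≤ S + α) :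
    R' ^ 2 * S' ≤ R ^ 2 * S := by
  have key : δ * (R ^ 2 * S - (R - c) ^ 2 * (S + α)) = (δ * S - R) * (c * (2 * R - c))
      + (2 * c - δ * α) * (R - c) ^ 2 + c ^ 2 * (3 * R - 2 * c) := by
    ring
  have hnonneg : 0 ≤ δ * (R ^ 2 * S - (R - c) ^ 2 * (S + α)) := by
    rw [key]
    have := mul_nonneg (sub_nonneg.2 hRS) (mul_nonneg hc (by linarith : 0 ≤ 2 * R - c))
    have := mul_nonneg (sub_nonneg.2 hδα) (sq_nonneg (R - c))
    have := mul_nonneg (sq_nonneg c) (by linarith : 0 ≤ 3 * R - 2 * c)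
    linarith
  calc R' ^ 2 * S' ≤ (R - c) ^ 2 * (S + α) :=
        mul_le_mul (pow_le_pow_left₀ hR'.le hRR' 2) hSS' hS' (sq_nonneg _)
    _ ≤ R ^ 2 * S := sub_nonneg.1 ((mul_nonneg_iff_of_pos_left hδ).1 hnonneg)

section l1

variable {N : ℕ}

theorem l1_nonneg (v : Fin N → ℝ) : 0 ≤ l1 v :=
  Finset.sum_nonneg fun _ _ ↦ abs_nonneg _

theorem l1_sub_le (u v : Fin N → ℝ) : l1 (u - v) ≤ l1 u + l1 v := by
  simp only [l1, Pi.sub_apply, ← Finset.sum_add_distrib]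
  exact Finset.sum_le_sum fun i _ ↦ abs_sub _ _

theorem l1_single (j : Fin N) (a : ℝ) : l1 (Pi.single j a) = |a| := by
  rw [l1, Finset.sum_eq_single j (fun b _ hb ↦ by simp [Pi.single_eq_of_ne hb]) (by simp)]
  simp

theorem dotProduct_le_mul_l1 {u : Fin N → ℝ} {δ : ℝ} (hu : ∀ j, |u j| ≤ δ) (v : Fin N → ℝ) :
    u ⬝ᵥ v ≤ δ * l1 v := by
  rw [l1, Finset.mul_sum]
  refine Finset.sum_le_sum fun j _ ↦ ?_
  calc u j * v j ≤ |u j| * |v j| := by rw [← abs_mul]; exact le_abs_self _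
    _ ≤ δ * |v j| := mul_le_mul_of_nonneg_right (hu j) (abs_nonneg _)

theorem abs_mulVec_le_l1 {m : ℕ} {M : Matrix (Fin m) (Fin N) ℝ} (hM : ∀ i j, |M i j| ≤ 1)
    (v : Fin N → ℝ) (i : Fin m) : |(M *ᵥ v) i| ≤ l1 v := by
  rw [mulVec, dotProduct]
  calc |∑ j, M i j * v j| ≤ ∑ j, |M i j * v j| := Finset.abs_sum_le_sum_abs _ _
    _ ≤ ∑ j, |v j| := Finset.sum_le_sum fun j _ ↦ by
        rw [abs_mul]; exact mul_le_of_le_one_left (abs_nonneg _) (hM i j)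

end l1

section expLoss

variable {m N : ℕ} (M : Matrix (Fin m) (Fin N) ℝ)

theorem sum_exp_neg_mulVec_pos (hm : 0 < m) (lam : Fin N → ℝ) :
    0 < ∑ i, exp (-(M *ᵥ lam) i) :=
  Finset.sum_pos (fun _ _ ↦ exp_pos _) (Finset.univ_nonempty_iff.2 ⟨⟨0, hm⟩⟩)

theorem expLoss_pos (hm : 0 < m) (lam : Fin N → ℝ) : 0 < expLoss M lam :=
  mul_pos (by positivity) (sum_exp_neg_mulVec_pos M hm lam)

theorem expLoss_zero (hm : 0 < m) : expLoss M 0 = 1 := by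
  have : (m : ℝ) ≠ 0 := by positivity
  simp [expLoss, this]

theorem exp_neg_l1_le_expLoss (hm : 0 < m) (hM : ∀ i j, |M i j| ≤ 1) (lam : Fin N → ℝ) :
    exp (-l1 lam) ≤ expLoss M lam := by
  have hmR : (0 : ℝ) < m := by positivity
  calc exp (-l1 lam) = (1 / m) * ∑ _i : Fin m, exp (-l1 lam) := by
        rw [Finset.sum_const, Finset.card_univ, Fintype.card_fin, nsmul_eq_mul]
        field_simp
    _ ≤ expLoss M lam := by
        refine mul_le_mul_of_nonneg_left (Finset.sum_le_sum fun i _ ↦ ?_) (by positivity)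
        exact exp_le_exp.2 (neg_le_neg (le_of_abs_le (abs_mulVec_le_l1 hM lam i)))

theorem wt_nonneg (lam : Fin N → ℝ) (i : Fin m) : 0 ≤ wt M lam i :=
  div_nonneg (exp_pos _).le (Finset.sum_nonneg fun _ _ ↦ (exp_pos _).le)

theorem sum_wt (hm : 0 < m) (lam : Fin N → ℝ) : ∑ i, wt M lam i = 1 := by
  simp only [wt]
  rw [← Finset.sum_div, div_self (sum_exp_neg_mulVec_pos M hm lam).ne']

theorem sum_wt_mul_exp_eq_div (hm : 0 < m) (lam μ : Fin N → ℝ) :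
    ∑ i, wt M lam i * exp (-(M *ᵥ (μ - lam)) i) = expLoss M μ / expLoss M lam := by
  have hterm : ∀ i, wt M lam i * exp (-(M *ᵥ (μ - lam)) i)
      = exp (-(M *ᵥ μ) i) / ∑ i', exp (-(M *ᵥ lam) i') := fun i ↦ by
    rw [wt, div_mul_eq_mul_div, ← exp_add, mulVec_sub, Pi.sub_apply]
    ring_nf
  have hinv_m : (1 / m : ℝ) ≠ 0 := by positivity
  rw [Finset.sum_congr rfl fun i _ ↦ hterm i, ← Finset.sum_div, expLoss, expLoss,
    mul_div_mul_left _ _ hinv_m]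

theorem log_expLoss_sub_le (hm : 0 < m) (lam μ : Fin N → ℝ) :
    log (expLoss M lam) - log (expLoss M μ) ≤ (wt M lam ᵥ* M) ⬝ᵥ (μ - lam) := by
  have jensen := convexOn_exp.map_sum_le (t := Finset.univ) (w := wt M lam)
    (p := fun i ↦ -(M *ᵥ (μ - lam)) i) (fun i _ ↦ wt_nonneg M lam i) (sum_wt M hm lam)
    (fun _ _ ↦ Set.mem_univ _)
  simp only [smul_eq_mul, sum_wt_mul_exp_eq_div M hm, mul_neg, Finset.sum_neg_distrib] at jensen
  have := log_le_log (exp_pos _) jensen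
  rw [log_exp, log_div (expLoss_pos M hm μ).ne' (expLoss_pos M hm lam).ne'] at this
  have hdot : (wt M lam ᵥ* M) ⬝ᵥ (μ - lam) = ∑ i, wt M lam i * (M *ᵥ (μ - lam)) i :=
    (dotProduct_mulVec _ _ _).symm
  rw [hdot]
  linarith

end expLoss

section Sdist

variable {m N : ℕ} (M : Matrix (Fin m) (Fin N) ℝ) (lamStar : Fin N → ℝ)

theorem Sdist_le {μ : Fin N → ℝ} (hμ : expLoss M μ ≤ expLoss M lamStar) (lam : Fin N → ℝ) :
    Sdist M lamStar lam ≤ l1 (μ - lam) :=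
  csInf_le ⟨0, fun _ ⟨_, _, hd⟩ ↦ hd ▸ l1_nonneg _⟩ ⟨μ, hμ, rfl⟩

theorem le_Sdist {lam : Fin N → ℝ} {a : ℝ}
    (h : ∀ μ, expLoss M μ ≤ expLoss M lamStar → a ≤ l1 (μ - lam)) : a ≤ Sdist M lamStar lam :=
  le_csInf ⟨_, lamStar, le_rfl, rfl⟩ fun _ ⟨μ, hμ, hd⟩ ↦ hd ▸ h μ hμ

theorem Sdist_nonneg (lam : Fin N → ℝ) : 0 ≤ Sdist M lamStar lam :=
  le_Sdist M lamStar fun _ _ ↦ l1_nonneg _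

theorem Sdist_add_single_le (lam : Fin N → ℝ) (j : Fin N) (a : ℝ) :
    Sdist M lamStar (lam + Pi.single j a) ≤ Sdist M lamStar lam + |a| := by
  rw [← sub_le_iff_le_add]
  refine le_Sdist M lamStar fun μ hμ ↦ ?_
  have := Sdist_le M lamStar hμ (lam + Pi.single j a)
  rw [← sub_sub] at this
  linarith [l1_sub_le (μ - lam) (Pi.single j a), l1_single j a]

theorem Rlog_le_mul_Sdist (hm : 0 < m) {lam : Fin N → ℝ} {δ : ℝ} (hδ : 0 ≤ δ)
    (hedge : ∀ j, |(wt M lam ᵥ* M) j| ≤ δ) : Rlog M lamStar lam ≤ δ * Sdist M lamStar lam := by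
  rw [Sdist, ← smul_eq_mul, ← Real.sInf_smul_of_nonneg hδ]
  refine le_csInf (Set.Nonempty.smul_set ⟨_, lamStar, le_rfl, rfl⟩) ?_
  rintro _ ⟨_, ⟨μ, hμ, rfl⟩, rfl⟩
  calc Rlog M lamStar lam ≤ log (expLoss M lam) - log (expLoss M μ) := by
        rw [Rlog]; gcongr; exact expLoss_pos M hm μ
    _ ≤ (wt M lam ᵥ* M) ⬝ᵥ (μ - lam) := log_expLoss_sub_le M hm lam μ
    _ ≤ δ * l1 (μ - lam) := dotProduct_le_mul_l1 hedge _

theorem Rlog_zero_le_l1 (hm : 0 < m) (hM : ∀ i j, |M i j| ≤ 1) :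
    Rlog M lamStar 0 ≤ l1 lamStar := by
  rw [Rlog, expLoss_zero M hm, log_one, zero_sub, neg_le]
  calc -l1 lamStar = log (exp (-l1 lamStar)) := (log_exp _).symm
    _ ≤ log (expLoss M lamStar) := log_le_log (exp_pos _) (exp_neg_l1_le_expLoss M hm hM lamStar)

theorem sq_Rlog_zero_mul_Sdist_zero_le (hm : 0 < m) (hM : ∀ i j, |M i j| ≤ 1)
    (hR : 0 ≤ Rlog M lamStar 0) : Rlog M lamStar 0 ^ 2 * Sdist M lamStar 0 ≤ l1 lamStar ^ 3 := by
  have hSB : Sdist M lamStar 0 ≤ l1 lamStar := by simpa using Sdist_le M lamStar le_rfl 0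
  calc Rlog M lamStar 0 ^ 2 * Sdist M lamStar 0 ≤ l1 lamStar ^ 2 * l1 lamStar :=
        mul_le_mul (pow_le_pow_left₀ hR (Rlog_zero_le_l1 M lamStar hm hM) 2) hSB
          (Sdist_nonneg M lamStar 0) (sq_nonneg _)
    _ = l1 lamStar ^ 3 := by ring

end Sdist

section descent

variable {m N : ℕ} (M : Matrix (Fin m) (Fin N) ℝ)

theorem sq_lt_one_of_expLoss_le (hm : 0 < m) {lam lam' : Fin N → ℝ} {x : ℝ}
    (h : expLoss M lam' ≤ expLoss M lam * √(1 - x ^ 2)) : x ^ 2 < 1 := by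
  by_contra! hx
  rw [sqrt_eq_zero'.2 (by linarith), mul_zero] at h
  exact (expLoss_pos M hm lam').not_ge h

theorem Rlog_le_of_expLoss_le (hm : 0 < m) (lamStar : Fin N → ℝ) {lam lam' : Fin N → ℝ} {x : ℝ}
    (h : expLoss M lam' ≤ expLoss M lam * √(1 - x ^ 2)) :
    Rlog M lamStar lam' ≤ Rlog M lamStar lam + log (1 - x ^ 2) / 2 := by
  have hx : 0 < 1 - x ^ 2 := sub_pos.2 (sq_lt_one_of_expLoss_le M hm h)
  have := log_le_log (expLoss_pos M hm lam') h
  rw [log_mul (expLoss_pos M hm lam).ne' (sqrt_pos.2 hx).ne', log_sqrt hx.le] at this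
  simp only [Rlog]
  linarith

end descent

namespace IsAdaBoost

variable {m N : ℕ} {M : Matrix (Fin m) (Fin N) ℝ} {lam : ℕ → Fin N → ℝ} {j : ℕ → Fin N}
  {r : ℕ → ℝ}

theorem sq_Rlog_mul_Sdist_succ_le (hAda : IsAdaBoost M lam j r) (hm : 0 < m) {t : ℕ}
    (hdrop : expLoss M (lam (t + 1)) ≤ expLoss M (lam t) * √(1 - r t ^ 2))
    (lamStar : Fin N → ℝ) (hR : 0 < Rlog M lamStar (lam (t + 1))) :
    Rlog M lamStar (lam (t + 1)) ^ 2 * Sdist M lamStar (lam (t + 1))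
      ≤ Rlog M lamStar (lam t) ^ 2 * Sdist M lamStar (lam t) := by
  obtain ⟨hmax, hr, hstep⟩ := hAda.2 t
  have hδ1 : |r t| < 1 := (sq_lt_one_iff_abs_lt_one _).1 (sq_lt_one_of_expLoss_le M hm hdrop)
  have hRR := Rlog_le_of_expLoss_le M hm lamStar hdrop
  rw [← sq_abs] at hRR
  have hSS : Sdist M lamStar (lam (t + 1)) ≤ Sdist M lamStar (lam t) + artanh |r t| := by
    rw [hstep, ← artanh_eq_half_log (Set.Ioo_subset_Icc_self (abs_lt.1 hδ1)), ← abs_artanh]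
    exact Sdist_add_single_le M lamStar _ _ _
  have hRS : Rlog M lamStar (lam t) ≤ |r t| * Sdist M lamStar (lam t) :=
    Rlog_le_mul_Sdist M lamStar hm (abs_nonneg _) fun j' ↦ hr ▸ hmax j'
  have hc : log (1 - |r t| ^ 2) ≤ 0 := log_nonpos (by nlinarith [abs_nonneg (r t)]) (by nlinarith)
  have hδ : 0 < |r t| := pos_of_mul_pos_left (by linarith) (Sdist_nonneg M lamStar _)
  have hδα : |r t| * artanh |r t| ≤ -log (1 - |r t| ^ 2) := mul_artanh_le (abs_nonneg _) hδ1
  exact sq_mul_le_sq_mul (c := -log (1 - |r t| ^ 2) / 2) hδ (by linarith) (by linarith) hRS hR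
    (by linarith) (Sdist_nonneg M lamStar _) hSS

end IsAdaBoost

/-- If `R₀,…,R_t` and `S₀,…,S_t` are all strictly positive along the AdaBoost
trajectory, then `S_t ≤ B³·R_t^{−2}` where `B = ‖λ*‖₁`. -/
theorem adaboost_S_le_B3_Rinv2 {m N : ℕ} (hm : 0 < m)
    (M : Matrix (Fin m) (Fin N) ℝ) (hM : ∀ i j, |M i j| ≤ 1)
    (lam : ℕ → Fin N → ℝ) (j : ℕ → Fin N) (r : ℕ → ℝ)
    (hAda : IsAdaBoost M lam j r)
    (hdrop : ∀ t : ℕ,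
      expLoss M (lam (t + 1)) ≤ expLoss M (lam t) * Real.sqrt (1 - r t ^ 2))
    (lamStar : Fin N → ℝ) (t : ℕ)
    (hpos : ∀ s ≤ t, 0 < Rlog M lamStar (lam s) ∧ 0 < Sdist M lamStar (lam s)) :
    Sdist M lamStar (lam t) ≤ l1 lamStar ^ 3 / Rlog M lamStar (lam t) ^ 2 := by
  have hinv : ∀ s ≤ t, Rlog M lamStar (lam s) ^ 2 * Sdist M lamStar (lam s) ≤ l1 lamStar ^ 3 := by
    intro s hs
    induction s with
    | zero =>
      rw [hAda.1]
      exact sq_Rlog_zero_mul_Sdist_zero_le M lamStar hm hM (hAda.1 ▸ (hpos 0 hs).1.le)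
    | succ s ih =>
      exact (hAda.sq_Rlog_mul_Sdist_succ_le hm (hdrop s) lamStar (hpos (s + 1) hs).1).trans
        (ih (by omega))
  rw [le_div_iff₀ (pow_pos (hpos t le_rfl).1 2), mul_comm]
  exact hinv t le_rfl
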